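/- Let (a_k) be a sequence of real numbers converging to a* such that (a_{k+1} - a*)/(a_k - a*) = σ + λ_k for all k, where |σ| < 1, σ ≠ 1, a_k ≠ a* for all k, and λ_k → 0. Define the Aitken transform b_k = a_k - (a_k - a_{k+1})²/(a_k - 2a_{k+1} + a_{k+2}) (whenever the denominator is nonzero). Then (b_k - a*)/(a_k - a*) → 0, i.e., the transformed sequence converges to a* faster than (a_k). -/

import Mathlib

/-!
Write `e k = a k - a*` and `r k = σ + λ k`, so that `e (k + 1) = r k * e k`. Dividing the Aitken
formula by `e k` gives `(b k - a*) / e k = 1 - (1 - r k)² / (1 - 2 r k + r k r (k + 1))`. As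
`r k → σ`, the denominator tends to `(1 - σ)²`, which is nonzero because `σ ≠ 1`, so the
quotient tends to `1` and the error ratio to `0`.
-/

open Filter Topology

lemma aitken_denom_eq {R : Type*} [CommRing R] {x y z c r s : R} (hy : y - c = r * (x - c))
    (hz : z - c = s * (y - c)) :
    x - 2 * y + z = (x - c) * (1 - 2 * r + r * s) := by
  linear_combination hz + (s - 2) * hy

-- No hypothesis on `1 - 2 r + r s` is needed: when it vanishes both sides are `1`, as `x / 0 = 0`.
lemma aitken_sub_div_eq {K : Type*} [Field K] {x y z c r s : K} (hx : x - c ≠ 0)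
    (hy : y - c = r * (x - c)) (hz : z - c = s * (y - c)) :
    (x - (x - y) ^ 2 / (x - 2 * y + z) - c) / (x - c) =
      1 - (1 - r) ^ 2 / (1 - 2 * r + r * s) := by
  have hxy : x - y = (x - c) * (1 - r) := by linear_combination -hy
  rw [aitken_denom_eq hy hz, hxy]
  field_simp
  ring

section Limit

variable {K α : Type*} [Field K] [TopologicalSpace K] [IsTopologicalDivisionRing K]
  {l : Filter α} {r s : α → K} {σ : K}

lemma tendsto_aitken_denom (hr : Tendsto r l (𝓝 σ)) (hs : Tendsto s l (𝓝 σ)) :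
    Tendsto (fun k => 1 - 2 * r k + r k * s k) l (𝓝 ((1 - σ) ^ 2)) := by
  have h := ((tendsto_const_nhds (x := (1 : K))).sub (hr.const_mul 2)).add (hr.mul hs)
  convert h using 2
  ring

lemma tendsto_one_sub_aitken_ratio (hr : Tendsto r l (𝓝 σ)) (hs : Tendsto s l (𝓝 σ))
    (hσ : σ ≠ 1) :
    Tendsto (fun k => 1 - (1 - r k) ^ 2 / (1 - 2 * r k + r k * s k)) l (𝓝 0) := by
  have hσ' : (1 - σ) ^ 2 ≠ 0 := pow_ne_zero _ (sub_ne_zero.mpr hσ.symm)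
  have h := (tendsto_const_nhds (x := (1 : K))).sub
    ((((tendsto_const_nhds (x := (1 : K))).sub hr).pow 2).div (tendsto_aitken_denom hr hs) hσ')
  simpa [div_self hσ'] using h

end Limit

theorem stmt_6_general (a : ℕ → ℝ) (astar σ : ℝ) (lam : ℕ → ℝ)
    (hσ1 : σ ≠ 1)
    (hne : ∀ k, a k ≠ astar)
    (hratio : ∀ k, (a (k + 1) - astar) / (a k - astar) = σ + lam k)
    (hlam : Filter.Tendsto lam Filter.atTop (nhds 0))
    (b : ℕ → ℝ)
    (hb : ∀ k, a k - 2 * a (k + 1) + a (k + 2) ≠ 0 →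
      b k = a k - (a k - a (k + 1)) ^ 2 / (a k - 2 * a (k + 1) + a (k + 2))) :
    Filter.Tendsto (fun k => (b k - astar) / (a k - astar)) Filter.atTop (nhds 0) := by
  set r : ℕ → ℝ := fun k => σ + lam k
  have hr : Tendsto r atTop (𝓝 σ) := by simpa using tendsto_const_nhds.add hlam
  have hr' : Tendsto (fun k => r (k + 1)) atTop (𝓝 σ) := hr.comp (tendsto_add_atTop_nat 1)
  have he : ∀ k, a k - astar ≠ 0 := fun k => sub_ne_zero.mpr (hne k)
  have hstep : ∀ k, a (k + 1) - astar = r k * (a k - astar) := fun k =>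
    (div_eq_iff (he k)).mp (hratio k)
  refine (tendsto_one_sub_aitken_ratio hr hr' hσ1).congr' ?_
  filter_upwards [(tendsto_aitken_denom hr hr').eventually_ne
    (pow_ne_zero 2 (sub_ne_zero.mpr hσ1.symm))] with k hk
  have hd : a k - 2 * a (k + 1) + a (k + 2) ≠ 0 := by
    rw [aitken_denom_eq (hstep k) (hstep (k + 1))]
    exact mul_ne_zero (he k) hk
  rw [hb k hd, aitken_sub_div_eq (he k) (hstep k) (hstep (k + 1))]

theorem stmt_6 (a : ℕ → ℝ) (astar σ : ℝ) (lam : ℕ → ℝ)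
    (ha : Filter.Tendsto a Filter.atTop (nhds astar))
    (hσ : |σ| < 1) (hσ1 : σ ≠ 1)
    (hne : ∀ k, a k ≠ astar)
    (hratio : ∀ k, (a (k + 1) - astar) / (a k - astar) = σ + lam k)
    (hlam : Filter.Tendsto lam Filter.atTop (nhds 0))
    (b : ℕ → ℝ)
    (hb : ∀ k, a k - 2 * a (k + 1) + a (k + 2) ≠ 0 →
      b k = a k - (a k - a (k + 1)) ^ 2 / (a k - 2 * a (k + 1) + a (k + 2))) :
    Filter.Tendsto (fun k => (b k - astar) / (a k - astar)) Filter.atTop (nhds 0) :=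
  stmt_6_general a astar σ lam hσ1 hne hratio hlam b hb
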